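/- arXiv:1211.6064 — 4 statements merged into one kernel-verified Lean document; each statement's English description precedes it below -/
import Mathlib

section
/- For every M > 1 the cone C(M) ⊆ B^n of vertex e₁ and amplitude M is admissible at e₁; more precisely, for every ε > 0 there exists δ > 0 such that for every z ∈ C(M) ∩ B(e₁,δ) one has π(z) ∈ C(M) and k(z,π(z)) < ε. -/
open Metric Filter Set Topology

/-- Inverse hyperbolic tangent. -/
noncomputable def arctanh (x : ℝ) : ℝ := (1/2) * Real.log ((1 + x) / (1 - x))

/-- The point `e₁ = (1,0,…,0)` of `ℂ^(n+1)`. -/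
noncomputable def e1 (n : ℕ) : EuclideanSpace ℂ (Fin (n+1)) := EuclideanSpace.single 0 1

/-- The Kobayashi distance of the unit ball `B^(n+1)`: `k(a,b) = arctanh σ(a,b)`. -/
noncomputable def kB {n : ℕ} (a b : EuclideanSpace ℂ (Fin (n+1))) : ℝ :=
  arctanh (Real.sqrt (1 - (1 - ‖a‖^2) * (1 - ‖b‖^2) / ‖1 - (inner ℂ a b : ℂ)‖^2))

/-- The projection `π(z) = ⟨z,e₁⟩e₁` (where `⟨z,w⟩ = Σ z_j conj(w_j)`). -/
noncomputable def projE1 {n : ℕ} (z : EuclideanSpace ℂ (Fin (n+1))) : EuclideanSpace ℂ (Fin (n+1)) :=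
  (inner ℂ (e1 n) z : ℂ) • e1 n

/-- The Stolz region `K(M,s)`. -/
def StolzK (M s : ℝ) : Set ℂ :=
  {ζ | ‖ζ‖ < 1 ∧ ‖1 - ζ‖ < M * (1 - ‖ζ‖) ∧ ‖1 - ζ‖ < s}

/-- The cone `C(M)` of vertex `e₁` and amplitude `M`. -/
def coneB (n : ℕ) (M : ℝ) : Set (EuclideanSpace ℂ (Fin (n+1))) :=
  {z | ‖z‖ < 1 ∧ ‖e1 n - z‖ < M * (1 - ‖z‖)}

/-- `e₁` is a boundary regular fixed point of `f`. -/
def IsBRFP {n : ℕ} (f : EuclideanSpace ℂ (Fin (n+1)) → EuclideanSpace ℂ (Fin (n+1))) : Prop :=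
  Filter.liminf (fun z => ENNReal.ofReal ((1 - ‖f z‖) / (1 - ‖z‖))) (𝓝[Metric.ball 0 1] (e1 n)) < ⊤ ∧
  Filter.Tendsto (fun r : ℝ => f ((r : ℂ) • e1 n)) (𝓝[Set.Ioo (0:ℝ) 1] 1) (𝓝 (e1 n))

/-- The determinant of the complex differential of `f` at `z`. -/
noncomputable def jacDet {n : ℕ} (f : EuclideanSpace ℂ (Fin (n+1)) → EuclideanSpace ℂ (Fin (n+1)))
    (z : EuclideanSpace ℂ (Fin (n+1))) : ℂ :=
  LinearMap.det (fderiv ℂ f z).toLinearMap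

/-- `e₁` is a boundary super-regular fixed point of `f`. -/
def IsBSRFP {n : ℕ} (f : EuclideanSpace ℂ (Fin (n+1)) → EuclideanSpace ℂ (Fin (n+1))) : Prop :=
  IsBRFP f ∧ ∀ M > 1, ∃ c > 0, ∀ ζ : ℕ → ℂ, (∀ k, ζ k ∈ StolzK M 2) →
    Filter.Tendsto ζ atTop (𝓝 1) →
    ENNReal.ofReal c ≤
      Filter.liminf (fun k => ENNReal.ofReal ‖jacDet f ((ζ k) • e1 n)‖) atTop

/-- `A ⊆ B^(n+1)` is admissible at `e₁`. -/
def AdmissibleB {n : ℕ} (A : Set (EuclideanSpace ℂ (Fin (n+1)))) : Prop :=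
  A ⊆ Metric.ball 0 1 ∧ e1 n ∈ closure A ∧
  ∀ ε > 0, ∃ δ > 0, ∃ M > 1, ∀ z ∈ A ∩ Metric.ball (e1 n) δ,
    projE1 z ∈ coneB n M ∧ kB z (projE1 z) < ε

/-!
Write `p = π(z)`; then `z - p` is orthogonal to `e₁`, and Pythagoras gives `‖p‖ ≤ ‖z‖` and
`‖e₁ - p‖, ‖z - p‖ ≤ ‖e₁ - z‖`, so `p` stays in the cone. Since `⟨z, p⟩ = ‖p‖²`, one gets
`σ(z, p)² = ‖z - p‖² / (1 - ‖p‖²)`, and in the cone `‖z - p‖ < M (1 - ‖p‖)` with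
`1 - ‖p‖ ≤ ‖e₁ - z‖`, hence `σ(z, p)² < M² ‖e₁ - z‖`. Continuity of `arctanh` at `0` concludes.
-/

lemma exists_arctanh_sqrt_lt {ε : ℝ} (hε : 0 < ε) :
    ∃ η > 0, ∀ x, 0 ≤ x → x < η → arctanh √x < ε := by
  have hcont : ContinuousAt (fun x ↦ arctanh √x) 0 := by
    unfold arctanh
    fun_prop (disch := norm_num)
  obtain ⟨η, hη, hclose⟩ := Metric.continuousAt_iff.mp hcont ε hε
  refine ⟨η, hη, fun x hx0 hxη ↦ ?_⟩
  have h0 : arctanh √0 = 0 := by simp [arctanh]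
  have := hclose (x := x) (by rwa [Real.dist_0_eq_abs, abs_of_nonneg hx0])
  rw [h0, Real.dist_eq, sub_zero] at this
  exact (le_abs_self _).trans_lt this

section LineProjection

variable {E : Type*} [NormedAddCommGroup E] [InnerProductSpace ℂ E] {u : E}

lemma inner_sub_inner_smul_self (hu : ‖u‖ = 1) (z : E) :
    inner ℂ u (z - inner ℂ u z • u) = 0 := by
  rw [inner_sub_right, inner_smul_right, inner_self_eq_norm_sq_to_K, hu]
  simp

lemma norm_smul_sub_sq_eq_add (hu : ‖u‖ = 1) (c : ℂ) (z : E) :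
    ‖c • u - z‖ ^ 2 = ‖c • u - inner ℂ u z • u‖ ^ 2 + ‖z - inner ℂ u z • u‖ ^ 2 := by
  have horth : inner ℂ (c • u - inner ℂ u z • u) (z - inner ℂ u z • u) = 0 := by
    rw [← sub_smul, inner_smul_left, inner_sub_inner_smul_self hu, mul_zero]
  rw [← sub_sub_sub_cancel_right (c • u) z (inner ℂ u z • u), norm_sub_sq (𝕜 := ℂ), horth]
  simp

lemma inner_inner_smul_self_right (hu : ‖u‖ = 1) (z : E) :
    inner ℂ z (inner ℂ u z • u) = ((‖inner ℂ u z • u‖ ^ 2 : ℝ) : ℂ) := by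
  rw [inner_smul_right, ← inner_conj_symm z u, RCLike.mul_conj, norm_smul, hu, mul_one]
  norm_cast

end LineProjection

section Projection

variable {n : ℕ} {M : ℝ} {z : EuclideanSpace ℂ (Fin (n+1))}

lemma norm_e1 : ‖e1 n‖ = 1 := by simp [e1]

lemma norm_e1_sub_sq_eq_add (z : EuclideanSpace ℂ (Fin (n+1))) :
    ‖e1 n - z‖ ^ 2 = ‖e1 n - projE1 z‖ ^ 2 + ‖z - projE1 z‖ ^ 2 := by
  simpa [projE1] using norm_smul_sub_sq_eq_add norm_e1 1 z

lemma norm_sq_eq_norm_projE1_sq_add (z : EuclideanSpace ℂ (Fin (n+1))) :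
    ‖z‖ ^ 2 = ‖projE1 z‖ ^ 2 + ‖z - projE1 z‖ ^ 2 := by
  simpa [projE1] using norm_smul_sub_sq_eq_add norm_e1 0 z

lemma norm_projE1_le (z : EuclideanSpace ℂ (Fin (n+1))) : ‖projE1 z‖ ≤ ‖z‖ :=
  le_of_sq_le_sq (by nlinarith [norm_sq_eq_norm_projE1_sq_add z]) (norm_nonneg z)

lemma norm_e1_sub_projE1_le (z : EuclideanSpace ℂ (Fin (n+1))) :
    ‖e1 n - projE1 z‖ ≤ ‖e1 n - z‖ :=
  le_of_sq_le_sq (by nlinarith [norm_e1_sub_sq_eq_add z]) (norm_nonneg _)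

lemma norm_sub_projE1_le (z : EuclideanSpace ℂ (Fin (n+1))) :
    ‖z - projE1 z‖ ≤ ‖e1 n - z‖ :=
  le_of_sq_le_sq (by nlinarith [norm_e1_sub_sq_eq_add z]) (norm_nonneg _)

lemma one_sub_norm_projE1_sq_pos (hz : ‖z‖ < 1) : 0 < 1 - ‖projE1 z‖ ^ 2 := by
  nlinarith [norm_projE1_le z, norm_nonneg (projE1 z)]

lemma kB_projE1 (hz : ‖z‖ < 1) :
    kB z (projE1 z) = arctanh √(‖z - projE1 z‖ ^ 2 / (1 - ‖projE1 z‖ ^ 2)) := by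
  have hpos := one_sub_norm_projE1_sq_pos hz
  have hinner : ‖1 - inner ℂ z (projE1 z)‖ = 1 - ‖projE1 z‖ ^ 2 := by
    have h : inner ℂ z (projE1 z) = ((‖projE1 z‖ ^ 2 : ℝ) : ℂ) :=
      inner_inner_smul_self_right norm_e1 z
    rw [h, ← Complex.ofReal_one, ← Complex.ofReal_sub, Complex.norm_real,
      Real.norm_of_nonneg hpos.le]
  rw [kB, hinner, norm_sq_eq_norm_projE1_sq_add z]
  congr 2
  field_simp
  ring

lemma projE1_mem_coneB (hz : z ∈ coneB n M) : projE1 z ∈ coneB n M := by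
  obtain ⟨hz1, hzM⟩ := hz
  have hM : 0 < M := by nlinarith [norm_nonneg (e1 n - z)]
  refine ⟨(norm_projE1_le z).trans_lt hz1, ?_⟩
  calc ‖e1 n - projE1 z‖ ≤ ‖e1 n - z‖ := norm_e1_sub_projE1_le z
    _ < M * (1 - ‖z‖) := hzM
    _ ≤ M * (1 - ‖projE1 z‖) := by gcongr; exact norm_projE1_le z

lemma sq_norm_sub_projE1_div_lt (hz : z ∈ coneB n M) :
    ‖z - projE1 z‖ ^ 2 / (1 - ‖projE1 z‖ ^ 2) < M ^ 2 * ‖e1 n - z‖ := by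
  obtain ⟨hz1, hzM⟩ := hz
  have hr := norm_projE1_le z
  have hr0 := norm_nonneg (projE1 z)
  have h1r : 1 - ‖projE1 z‖ ≤ ‖e1 n - z‖ := by
    have := norm_sub_norm_le (e1 n) (projE1 z)
    rw [norm_e1] at this
    exact this.trans (norm_e1_sub_projE1_le z)
  have hW : ‖z - projE1 z‖ ^ 2 < (M * (1 - ‖projE1 z‖)) ^ 2 :=
    calc ‖z - projE1 z‖ ^ 2 ≤ ‖e1 n - z‖ ^ 2 := by gcongr; exact norm_sub_projE1_le z
      _ < (M * (1 - ‖z‖)) ^ 2 := by gcongr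
      _ ≤ (M * (1 - ‖projE1 z‖)) ^ 2 := by
        rw [mul_pow, mul_pow]; gcongr
  rw [div_lt_iff₀ (one_sub_norm_projE1_sq_pos hz1)]
  calc ‖z - projE1 z‖ ^ 2 < M ^ 2 * (1 - ‖projE1 z‖) * (1 - ‖projE1 z‖) := by linarith
    _ ≤ M ^ 2 * ‖e1 n - z‖ * ((1 - ‖projE1 z‖) * (1 + ‖projE1 z‖)) := by
      have hr1 : 0 ≤ 1 - ‖projE1 z‖ := by linarith
      gcongr
      nlinarith [mul_nonneg hr0 hr1]
    _ = M ^ 2 * ‖e1 n - z‖ * (1 - ‖projE1 z‖ ^ 2) := by ring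

end Projection

/-- **Lemma (cones are admissible at `e₁`).**
For every `M > 1` and every `ε > 0` there exists `δ > 0` such that for every
`z ∈ C(M) ∩ B(e₁,δ)` one has `π(z) ∈ C(M)` and `k(z,π(z)) < ε`. -/
theorem cone_admissible_at_e1 {n : ℕ} :
    ∀ M > 1, ∀ ε > 0, ∃ δ > 0,
      ∀ z ∈ coneB n M ∩ Metric.ball (e1 n) δ,
        projE1 z ∈ coneB n M ∧ kB z (projE1 z) < ε := by
  intro M hM ε hε
  obtain ⟨η, hη, hsmall⟩ := exists_arctanh_sqrt_lt hε
  refine ⟨η / M ^ 2, by positivity, fun z ⟨hz, hzδ⟩ ↦ ⟨projE1_mem_coneB hz, ?_⟩⟩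
  rw [mem_ball, dist_comm, dist_eq_norm] at hzδ
  rw [kB_projE1 hz.1]
  refine hsmall _ (div_nonneg (sq_nonneg _) (one_sub_norm_projE1_sq_pos hz.1).le) ?_
  calc ‖z - projE1 z‖ ^ 2 / (1 - ‖projE1 z‖ ^ 2) < M ^ 2 * ‖e1 n - z‖ :=
        sq_norm_sub_projE1_div_lt hz
    _ ≤ M ^ 2 * (η / M ^ 2) := by gcongr
    _ = η := by field_simp
end

section
/- Let c > 0 and t' ∈ (0,1). Then there exists r' = r'(c,t') > 0 such that for every holomorphic map f : B^n → B^n with f(0) = 0 and |det(df_0)| ≥ c, one has B(0,r') ⊆ f(B(0,t')). -/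
open Metric Filter Set Topology

/-!
By Cauchy's estimate the differential `A = df₀` of a holomorphic self-map of the ball fixing `0`
has norm at most `1`. The maps with `‖A‖ ≤ 1` and `|det A| ≥ c` form a compact set of invertible
maps, so `‖A⁻¹‖ ≤ N` for some `N = N(c, n)`. Cauchy estimates applied to the second-order
remainder `f - A` give `‖df_z - A‖ ≤ 10ρ` on `B(0, ρ)` for `ρ ≤ 1/2`, uniformly in `f`. Hence for
`ρ ≤ 1/(20N)` the map `f` is so close to `A` on `B(0, ρ)` that the quantitative inverse function
theorem, applied with the right inverse `A⁻¹`, yields `B(0, ρ/(4N)) ⊆ f(B(0, ρ))`.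
-/

section Holomorphic

variable {E F : Type*} [NormedAddCommGroup E] [NormedSpace ℂ E]
  [NormedAddCommGroup F] [NormedSpace ℂ F]

theorem dist_le_mul_div_sq_of_fderiv_eq_zero {f : E → F} {c z : E} {R M : ℝ}
    (hd : DifferentiableOn ℂ f (ball c R)) (hm : MapsTo f (ball c R) (closedBall (f c) M))
    (hf' : fderiv ℂ f c = 0) (hz : z ∈ ball c R) :
    dist (f z) (f c) ≤ M * (dist z c / R) ^ 2 := by
  have hc : HasFDerivAt f (0 : E →L[ℂ] F) c := hf' ▸
    (hd.differentiableAt (isOpen_ball.mem_nhds (mem_ball_self (pos_of_mem_ball hz)))).hasFDerivAt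
  refine Complex.dist_le_mul_div_pow_of_mapsTo_ball_of_isLittleO (n := 1) hd hm ?_ hz
  simpa using hc.isLittleO.norm_right

-- By Cauchy's estimate `‖fderiv ℂ f c‖ ≤ M / R`, the map `f - fderiv ℂ f c` sends the ball
-- into a ball of radius `2 * M`, and it vanishes to second order at `c`.
theorem norm_sub_sub_fderiv_le {f : E → F} {c z : E} {R M : ℝ}
    (hd : DifferentiableOn ℂ f (ball c R)) (hm : MapsTo f (ball c R) (closedBall (f c) M))
    (hz : z ∈ ball c R) :
    ‖f z - f c - fderiv ℂ f c (z - c)‖ ≤ 2 * M * (dist z c / R) ^ 2 := by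
  set A := fderiv ℂ f c
  have hR : 0 < R := pos_of_mem_ball hz
  have hM : 0 ≤ M := nonempty_closedBall.mp (hm.nonempty (nonempty_ball.mpr hR))
  have hA : ‖A‖ ≤ M / R := Complex.norm_fderiv_le_div_of_mapsTo_ball hd hm hR
  have hg' : fderiv ℂ (fun y => f y - A y) c = 0 := by
    rw [fderiv_fun_sub (hd.differentiableAt (isOpen_ball.mem_nhds (mem_ball_self hR)))
      A.differentiableAt, A.fderiv, sub_self]
  have hgm : MapsTo (fun y => f y - A y) (ball c R) (closedBall (f c - A c) (2 * M)) := by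
    intro y hy
    rw [mem_closedBall, dist_eq_norm, sub_sub_sub_comm, ← map_sub]
    calc ‖f y - f c - A (y - c)‖ ≤ ‖f y - f c‖ + ‖A‖ * ‖y - c‖ :=
          (norm_sub_le _ _).trans (by gcongr; exact A.le_opNorm _)
      _ ≤ M + M / R * R := by
          gcongr
          · exact mem_closedBall_iff_norm.1 (hm hy)
          · exact (mem_ball_iff_norm.1 hy).le
      _ = 2 * M := by field_simp; ring
  have := dist_le_mul_div_sq_of_fderiv_eq_zero (hd.sub A.differentiableOn) hgm hg' hz
  rwa [dist_eq_norm, Pi.sub_apply, Pi.sub_apply, sub_sub_sub_comm, ← map_sub] at this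

-- Cauchy's estimate on `ball z ρ` for `f - fderiv ℂ f c`, whose oscillation there is
-- `O(M ρ² / R²)` by the second-order bound at `c`.
theorem norm_fderiv_sub_fderiv_le {f : E → F} {c z : E} {R M ρ : ℝ}
    (hd : DifferentiableOn ℂ f (ball c R)) (hm : MapsTo f (ball c R) (closedBall (f c) M))
    (hρ : 2 * ρ ≤ R) (hz : z ∈ ball c ρ) :
    ‖fderiv ℂ f z - fderiv ℂ f c‖ ≤ 10 * M * ρ / R ^ 2 := by
  set A := fderiv ℂ f c
  set g := fun y => f y - A y
  have hρ0 : 0 < ρ := pos_of_mem_ball hz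
  have hR : 0 < R := by linarith
  have hM : 0 ≤ M := nonempty_closedBall.mp (hm.nonempty (nonempty_ball.mpr hR))
  have hsub : ball z ρ ⊆ ball c R := ball_subset_ball' (by rw [mem_ball] at hz; linarith)
  have hrem : ∀ y, dist y c < 2 * ρ → ‖g y - g c‖ ≤ 2 * M * (dist y c / R) ^ 2 := by
    intro y hy
    rw [sub_sub_sub_comm, ← map_sub]
    exact norm_sub_sub_fderiv_le hd hm (hy.trans_le hρ)
  have hgm : MapsTo g (ball z ρ) (closedBall (g z) (10 * M * ρ ^ 2 / R ^ 2)) := by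
    intro y hy
    have hyc : dist y c < 2 * ρ := calc
      dist y c ≤ dist y z + dist z c := dist_triangle _ _ _
      _ < ρ + ρ := add_lt_add hy hz
      _ = 2 * ρ := by ring
    have hzc : dist z c < 2 * ρ := (mem_ball.1 hz).trans (by linarith)
    rw [mem_closedBall, dist_eq_norm]
    calc ‖g y - g z‖ ≤ ‖g y - g c‖ + ‖g z - g c‖ := by
          rw [norm_sub_rev (g z)]; exact norm_sub_le_norm_sub_add_norm_sub _ _ _
      _ ≤ 2 * M * (dist y c / R) ^ 2 + 2 * M * (dist z c / R) ^ 2 :=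
          add_le_add (hrem y hyc) (hrem z hzc)
      _ ≤ 2 * M * (2 * ρ / R) ^ 2 + 2 * M * (ρ / R) ^ 2 := by
          gcongr
          exact (mem_ball.1 hz).le
      _ = 10 * M * ρ ^ 2 / R ^ 2 := by ring
  have hg' : fderiv ℂ g z = fderiv ℂ f z - A := by
    rw [fderiv_fun_sub (hd.differentiableAt (isOpen_ball.mem_nhds (hsub (mem_ball_self hρ0))))
      A.differentiableAt, A.fderiv]
  have := Complex.norm_fderiv_le_div_of_mapsTo_ball (f := g)
    ((hd.sub A.differentiableOn).mono hsub) hgm hρ0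
  rw [hg'] at this
  exact this.trans_eq (by field_simp)

theorem approximatesLinearOn_fderiv_ball {f : E → F} {c : E} {R M ρ : ℝ}
    (hd : DifferentiableOn ℂ f (ball c R)) (hm : MapsTo f (ball c R) (closedBall (f c) M))
    (hρ : 2 * ρ ≤ R) :
    ApproximatesLinearOn f (fderiv ℂ f c) (ball c ρ) (10 * M * ρ / R ^ 2).toNNReal := by
  intro x hx y hy
  have hsub : ball c ρ ⊆ ball c R := ball_subset_ball (by linarith [pos_of_mem_ball hx])
  rw [Real.coe_toNNReal']
  exact (convex_ball c ρ).norm_image_sub_le_of_norm_fderiv_le'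
    (fun z hz => hd.differentiableAt (isOpen_ball.mem_nhds (hsub hz)))
    (fun z hz => (norm_fderiv_sub_fderiv_le hd hm hρ hz).trans (le_max_left _ _)) hy hx

end Holomorphic

section Determinant

variable {𝕜 E : Type*} [RCLike 𝕜] [NormedAddCommGroup E] [NormedSpace 𝕜 E]
  [FiniteDimensional 𝕜 E]

theorem ContinuousLinearMap.isUnit_of_isUnit_det {A : E →L[𝕜] E} (h : IsUnit A.det) :
    IsUnit A :=
  ⟨(LinearMap.equivOfIsUnitDet h).toContinuousLinearEquiv.toUnit, by
    ext x; exact LinearMap.equivOfIsUnitDet_apply h x⟩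

theorem exists_norm_inverse_le_of_le_norm_det (K : ℝ) {c : ℝ} (hc : 0 < c) :
    ∃ N > 0, ∀ A : E →L[𝕜] E, ‖A‖ ≤ K → c ≤ ‖A.det‖ → IsUnit A ∧ ‖Ring.inverse A‖ ≤ N := by
  have := FiniteDimensional.complete 𝕜 E
  have := FiniteDimensional.proper_rclike 𝕜 (E →L[𝕜] E)
  set s := closedBall (0 : E →L[𝕜] E) K ∩ {A | c ≤ ‖A.det‖}
  have hunit : ∀ A ∈ s, IsUnit A := fun A hA =>
    ContinuousLinearMap.isUnit_of_isUnit_det <| isUnit_iff_ne_zero.2 <|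
      norm_pos_iff.1 (hc.trans_le hA.2)
  have hs : IsCompact s := (isCompact_closedBall 0 K).inter_right <|
    isClosed_le continuous_const (continuous_norm.comp ContinuousLinearMap.continuous_det)
  obtain ⟨N, hN⟩ := hs.exists_bound_of_continuousOn fun A hA =>
    (NormedRing.inverse_continuousAt (hunit A hA).unit).continuousWithinAt
  refine ⟨max N 1, by positivity, fun A hK hdet => ?_⟩
  have hA : A ∈ s := ⟨mem_closedBall_zero_iff.2 hK, hdet⟩
  exact ⟨hunit A hA, (hN A hA).trans (le_max_left _ _)⟩

end Determinant

section RightInverse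

variable {𝕜 E : Type*} [NontriviallyNormedField 𝕜] [NormedAddCommGroup E] [NormedSpace 𝕜 E]

noncomputable def ContinuousLinearMap.NonlinearRightInverse.ofIsUnit {A : E →L[𝕜] E} (hA : IsUnit A)
    (N : NNReal) (hN : ‖Ring.inverse A‖ ≤ N) : A.NonlinearRightInverse where
  toFun y := Ring.inverse A y
  nnnorm := N
  bound' := (Ring.inverse A).le_of_opNorm_le hN
  right_inv' y := by
    change (A * Ring.inverse A) y = y
    rw [Ring.mul_inverse_cancel _ hA]
    rfl

end RightInverse

section Koebe

variable {E : Type*} [NormedAddCommGroup E] [NormedSpace ℂ E] [CompleteSpace E]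

theorem ball_subset_image_ball_of_norm_inverse_fderiv_le {f : E → E}
    (hd : DifferentiableOn ℂ f (ball 0 1)) (hm : MapsTo f (ball 0 1) (closedBall (f 0) 1))
    (hA : IsUnit (fderiv ℂ f 0)) {N ρ : ℝ} (hN : 0 < N) (hS : ‖Ring.inverse (fderiv ℂ f 0)‖ ≤ N)
    (hρ0 : 0 < ρ) (hρ1 : 2 * ρ ≤ 1) (hρN : 20 * N * ρ ≤ 1) :
    ball (f 0) (ρ / (4 * N)) ⊆ f '' ball 0 ρ := by
  have happrox : ApproximatesLinearOn f (fderiv ℂ f 0) (ball 0 ρ) (10 * ρ).toNNReal := by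
    simpa using approximatesLinearOn_fderiv_ball hd hm hρ1
  have hr : ρ / (4 * N) ≤ ((N.toNNReal : ℝ)⁻¹ - (10 * ρ).toNNReal) * (ρ / 2) := by
    rw [Real.coe_toNNReal _ hN.le, Real.coe_toNNReal _ (by positivity)]
    calc ρ / (4 * N) = (N⁻¹ - N⁻¹ / 2) * (ρ / 2) := by field_simp; ring
      _ ≤ (N⁻¹ - 10 * ρ) * (ρ / 2) := by
          gcongr
          field_simp
          linarith
  have hsurj := happrox.surjOn_closedBall_of_nonlinearRightInverse
    (.ofIsUnit hA N.toNNReal (hS.trans N.le_coe_toNNReal)) (by positivity)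
    (closedBall_subset_ball (half_lt_self hρ0))
  exact hsurj.mono (closedBall_subset_ball (half_lt_self hρ0))
    (ball_subset_closedBall.trans (closedBall_subset_closedBall hr))

end Koebe

/-- **Lemma (uniform Koebe-type lemma).**
For `c > 0` and `t' ∈ (0,1)` there exists `r' > 0` such that `B(0,r') ⊆ f(B(0,t'))` for
every holomorphic `f : B^n → B^n` with `f(0) = 0` and `|det df₀| ≥ c`. -/
theorem uniform_koebe_lemma {n : ℕ} :
    ∀ c > 0, ∀ t' ∈ Set.Ioo (0:ℝ) 1, ∃ r' > 0,
      ∀ f : EuclideanSpace ℂ (Fin (n+1)) → EuclideanSpace ℂ (Fin (n+1)),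
        DifferentiableOn ℂ f (Metric.ball 0 1) →
        Set.MapsTo f (Metric.ball 0 1) (Metric.ball 0 1) →
        f 0 = 0 → c ≤ ‖jacDet f 0‖ →
        Metric.ball (0 : EuclideanSpace ℂ (Fin (n+1))) r' ⊆ f '' Metric.ball 0 t' := by
  intro c hc t' ht'
  obtain ⟨N, hN0, hN⟩ := exists_norm_inverse_le_of_le_norm_det
    (𝕜 := ℂ) (E := EuclideanSpace ℂ (Fin (n+1))) 1 hc
  set ρ := min (t' / 2) (1 / (20 * N))
  have hρ0 : 0 < ρ := lt_min (by linarith [ht'.1]) (by positivity)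
  have hρt : ρ ≤ t' / 2 := min_le_left _ _
  have hρN : 20 * N * ρ ≤ 1 := calc
    20 * N * ρ ≤ 20 * N * (1 / (20 * N)) := by gcongr; exact min_le_right _ _
    _ = 1 := by field_simp
  refine ⟨ρ / (4 * N), by positivity, fun f hd hm h0 hdet => ?_⟩
  have hm' : MapsTo f (ball 0 1) (closedBall (f 0) 1) := by
    rw [h0]; exact hm.mono_right ball_subset_closedBall
  obtain ⟨hA, hS⟩ := hN (fderiv ℂ f 0)
    (Complex.norm_fderiv_le_one_of_mapsTo_ball hd hm' one_pos) hdet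
  have hkoebe := ball_subset_image_ball_of_norm_inverse_fderiv_le hd hm' hA hN0 hS hρ0
    (by linarith [ht'.2]) hρN
  rw [h0] at hkoebe
  exact hkoebe.trans (image_mono (ball_subset_ball (by linarith)))
end

section
/- Let ℍ = {ζ ∈ ℂ : Re ζ > 0} and ℍ² = {(z,w) ∈ ℂ² : Re z > |w|²}. Let φ : ℍ → ℂ be holomorphic with Re φ(ζ) > 3 for all ζ ∈ ℍ, and let α > 0 satisfy Re φ(ζ) ≥ α·Re ζ for all ζ ∈ ℍ. Let ε, δ > 0 with ε² < 3/4 and δ ≤ 2, and define Φ(z,w) = (φ(z), √α·δ·w/(1+φ(z)) + ε·z/(1+z)). Then Φ maps ℍ² into ℍ². -/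
open Metric Filter Set Topology

/-- The right half-plane `ℍ = {ζ : Re ζ > 0}`. -/
def rightHalfPlane : Set ℂ := {ζ | 0 < ζ.re}

/-- The Siegel domain `ℍ² = {(z,w) ∈ ℂ² : Re z > |w|²}`. -/
def Siegel2 : Set (ℂ × ℂ) := {p | ‖p.2‖ ^ 2 < p.1.re}

/-!
Write the second component of `Φ(z,w)` as `u + v`. Since `|1 + φ(z)| ≥ 1 + Re φ(z) ≥ 4` and
`α δ² |w|² ≤ 4 α Re z ≤ 4 Re φ(z)`, we get `|u|² ≤ Re φ(z) / 4`; since `|z| < |1 + z|` on `ℍ`,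
`|v|² ≤ ε² < 3/4 < Re φ(z) / 4`. Hence `|u + v|² ≤ 2|u|² + 2|v|² < Re φ(z)`.
-/

namespace Complex

lemma norm_lt_norm_one_add {z : ℂ} (hz : 0 < z.re) : ‖z‖ < ‖1 + z‖ := by
  rw [← sq_lt_sq₀ (norm_nonneg _) (norm_nonneg _), Complex.sq_norm, Complex.sq_norm]
  simp only [normSq_apply, add_re, add_im, one_re, one_im]
  nlinarith

lemma norm_ofReal_mul_div_one_add_le {z : ℂ} (hz : 0 < z.re) (ε : ℝ) :
    ‖(ε : ℂ) * z / (1 + z)‖ ≤ |ε| := by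
  have hpos : 0 < ‖1 + z‖ := (norm_nonneg z).trans_lt (norm_lt_norm_one_add hz)
  rw [mul_div_assoc, norm_mul, norm_real, Real.norm_eq_abs, norm_div]
  exact mul_le_of_le_one_right (abs_nonneg ε)
    ((div_le_one hpos).2 (norm_lt_norm_one_add hz).le)

lemma norm_div_one_add_sq_le {c ζ : ℂ} (hζ : 3 ≤ ζ.re) (hc : ‖c‖ ^ 2 ≤ 4 * ζ.re) :
    ‖c / (1 + ζ)‖ ^ 2 ≤ ζ.re / 4 := by
  have h4 : 4 ≤ ‖1 + ζ‖ := by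
    simpa [add_re] using (by linarith : (4 : ℝ) ≤ 1 + ζ.re).trans (re_le_norm (1 + ζ))
  have h16 : 16 ≤ ‖1 + ζ‖ ^ 2 := by nlinarith
  rw [norm_div, div_pow, div_le_iff₀ (by positivity)]
  nlinarith

end Complex

theorem siegel_self_map_general (φ : ℂ → ℂ)
    (hφ3 : ∀ ζ ∈ rightHalfPlane, 3 < (φ ζ).re)
    (α : ℝ) (hα : 0 < α)
    (hαφ : ∀ ζ ∈ rightHalfPlane, α * ζ.re ≤ (φ ζ).re)
    (ε δ : ℝ) (hδ : 0 < δ) (hε2 : ε ^ 2 < 3 / 4) (hδ2 : δ ≤ 2)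
    (Φ : ℂ × ℂ → ℂ × ℂ)
    (hΦ : ∀ p : ℂ × ℂ, Φ p =
      (φ p.1, (Real.sqrt α : ℂ) * (δ : ℂ) * p.2 / (1 + φ p.1) + (ε : ℂ) * p.1 / (1 + p.1))) :
    Set.MapsTo Φ Siegel2 Siegel2 := by
  rintro ⟨z, w⟩ (hw : ‖w‖ ^ 2 < z.re)
  have hz : z ∈ rightHalfPlane := (sq_nonneg _).trans_lt hw
  show ‖_‖ ^ 2 < _
  rw [hΦ]
  have hR := hφ3 z hz
  have hc : ‖(Real.sqrt α : ℂ) * δ * w‖ ^ 2 ≤ 4 * (φ z).re := by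
    rw [norm_mul, norm_mul, Complex.norm_real, Complex.norm_real, Real.norm_of_nonneg
      (Real.sqrt_nonneg α), Real.norm_of_nonneg hδ.le, mul_pow, mul_pow, Real.sq_sqrt hα.le]
    have hδ4 : δ ^ 2 ≤ 4 := by nlinarith
    nlinarith [hαφ z hz, mul_le_mul_of_nonneg_left hw.le hα.le, sq_nonneg ‖w‖]
  have hu := Complex.norm_div_one_add_sq_le hR.le hc
  have hv := pow_le_pow_left₀ (norm_nonneg _) (Complex.norm_ofReal_mul_div_one_add_le hz ε) 2
  rw [sq_abs] at hv
  calc _ ≤ (‖(Real.sqrt α : ℂ) * δ * w / (1 + φ z)‖ + ‖(ε : ℂ) * z / (1 + z)‖) ^ 2 :=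
        pow_le_pow_left₀ (norm_nonneg _) (norm_add_le _ _) 2
    _ ≤ 2 * (‖(Real.sqrt α : ℂ) * δ * w / (1 + φ z)‖ ^ 2 + ‖(ε : ℂ) * z / (1 + z)‖ ^ 2) :=
        add_sq_le
    _ < (φ z).re := by linarith

/-- **Claim (the map `Φ` sends `ℍ²` into `ℍ²`).**
Let `φ : ℍ → ℂ` be holomorphic with `Re φ > 3` on `ℍ` and `Re φ(ζ) ≥ α·Re ζ` for some
`α > 0`. If `ε² < 3/4` and `0 < δ ≤ 2`, then
`Φ(z,w) = (φ(z), √α·δ·w/(1+φ(z)) + ε·z/(1+z))` maps `ℍ²` into `ℍ²`. -/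
theorem siegel_self_map (φ : ℂ → ℂ)
    (hφd : DifferentiableOn ℂ φ rightHalfPlane)
    (hφ3 : ∀ ζ ∈ rightHalfPlane, 3 < (φ ζ).re)
    (α : ℝ) (hα : 0 < α)
    (hαφ : ∀ ζ ∈ rightHalfPlane, α * ζ.re ≤ (φ ζ).re)
    (ε δ : ℝ) (hε : 0 < ε) (hδ : 0 < δ) (hε2 : ε ^ 2 < 3 / 4) (hδ2 : δ ≤ 2)
    (Φ : ℂ × ℂ → ℂ × ℂ)
    (hΦ : ∀ p : ℂ × ℂ, Φ p =
      (φ p.1, (Real.sqrt α : ℂ) * (δ : ℂ) * p.2 / (1 + φ p.1) + (ε : ℂ) * p.1 / (1 + p.1))) :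
    Set.MapsTo Φ Siegel2 Siegel2 :=
  siegel_self_map_general φ hφ3 α hα hαφ ε δ hδ hε2 hδ2 Φ hΦ
end

section
/- Let ℍ = {ζ ∈ ℂ : Re ζ > 0} and ℍ² = {(z,w) ∈ ℂ² : Re z > |w|²}. Let φ : ℍ → ℂ be holomorphic with Re φ(ζ) > 3 for all ζ ∈ ℍ, let α > 0 satisfy Re φ(ζ) ≥ α·Re ζ for all ζ ∈ ℍ, and let 0 < R₀ < 1 < R_∞. Assume: whenever z₀, z₁ ∈ ℍ with z₀ ≠ z₁ and φ(z₀) = φ(z₁), then, up to swapping z₀ and z₁, one has |z₀| < R₀ and |z₁| > R_∞. Let ε, δ > 0 satisfy ε·(R_∞/(1+R_∞) − R₀/(1−R₀)) > 2δ, and define Φ(z,w) = (φ(z), √α·δ·w/(1+φ(z)) + ε·z/(1+z)). Then Φ is injective on ℍ². -/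
open Metric Filter Set Topology

/-!
If `Φ(z₀,w₀) = Φ(z₁,w₁)` with `z₀ ≠ z₁`, then `φ(z₀) = φ(z₁) =: f` and the hypothesis on `φ`
puts `z₀` near `0` and `z₁` near `∞`, so the values of `ε z/(1+z)` at the two points are at
distance at least `ε (R_∞/(1+R_∞) − R₀/(1−R₀)) > δ`. On the other hand `α|wᵢ|² < α Re zᵢ ≤ Re f`,
so by AM-GM each term `√α δ wᵢ/(1+f)` has modulus at most `δ/2`, and these cannot make up the
difference. If `z₀ = z₁`, the second coordinate is an affine function of `w` with nonzero slope.
-/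

namespace Complex

lemma one_add_re_le_norm_one_add (z : ℂ) : 1 + z.re ≤ ‖1 + z‖ := by
  simpa using re_le_norm (1 + z)

lemma one_add_ne_zero_of_re_nonneg {z : ℂ} (hz : 0 ≤ z.re) : 1 + z ≠ 0 :=
  norm_pos_iff.mp ((one_add_re_le_norm_one_add z).trans_lt' (by linarith))

lemma norm_div_one_add_le {z : ℂ} {R : ℝ} (hz : ‖z‖ ≤ R) (hR : R < 1) :
    ‖z / (1 + z)‖ ≤ R / (1 - R) := by
  have hden : 1 - ‖z‖ ≤ ‖1 + z‖ := by simpa using norm_sub_norm_le (1 : ℂ) (-z)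
  rw [norm_div]
  calc ‖z‖ / ‖1 + z‖ ≤ ‖z‖ / (1 - ‖z‖) := by gcongr; linarith
    _ ≤ R / (1 - R) := by
      rw [div_le_div_iff₀ (by linarith) (by linarith)]
      nlinarith [norm_nonneg z]

lemma div_one_add_le_norm_div_one_add {z : ℂ} {R : ℝ} (hR : 0 ≤ R) (hz : R ≤ ‖z‖)
    (hz1 : 1 + z ≠ 0) : R / (1 + R) ≤ ‖z / (1 + z)‖ := by
  have hden : ‖1 + z‖ ≤ 1 + ‖z‖ := by simpa using norm_add_le (1 : ℂ) z
  rw [norm_div]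
  calc R / (1 + R) ≤ ‖z‖ / (1 + ‖z‖) := by
        rw [div_le_div_iff₀ (by linarith) (by positivity)]
        nlinarith
    _ ≤ ‖z‖ / ‖1 + z‖ := by gcongr

lemma norm_sqrt_mul_mul_div_one_add_le {α δ : ℝ} (hα : 0 ≤ α) (hδ : 0 ≤ δ) {w f : ℂ}
    (hw : α * ‖w‖ ^ 2 ≤ f.re) : ‖(√α : ℂ) * δ * w / (1 + f)‖ ≤ δ / 2 := by
  have hf : 0 ≤ f.re := (by positivity : 0 ≤ α * ‖w‖ ^ 2).trans hw
  have hsqrt : √α * ‖w‖ ≤ √f.re := by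
    rw [← Real.sqrt_sq (norm_nonneg w), ← Real.sqrt_mul hα]
    exact Real.sqrt_le_sqrt hw
  have hamgm : 2 * √f.re ≤ 1 + f.re := by
    nlinarith [sq_nonneg (√f.re - 1), Real.sq_sqrt hf]
  have hden := one_add_re_le_norm_one_add f
  rw [norm_div, norm_mul, norm_mul, norm_real, norm_real, Real.norm_of_nonneg (Real.sqrt_nonneg α),
    Real.norm_of_nonneg hδ, div_le_iff₀ (by linarith)]
  nlinarith [mul_nonneg hδ (Real.sqrt_nonneg α)]

lemma add_mul_div_one_add_ne {δ ε R₀ Rinf : ℝ} (hε : 0 ≤ ε) (hR₀ : R₀ < 1) (hRinf : 0 ≤ Rinf)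
    (hgap : δ < ε * (Rinf / (1 + Rinf) - R₀ / (1 - R₀))) {a₀ a₁ z₀ z₁ : ℂ}
    (ha₀ : ‖a₀‖ ≤ δ / 2) (ha₁ : ‖a₁‖ ≤ δ / 2) (hz₀ : ‖z₀‖ ≤ R₀) (hz₁ : Rinf ≤ ‖z₁‖)
    (hz₁1 : 1 + z₁ ≠ 0) :
    a₀ + ε * z₀ / (1 + z₀) ≠ a₁ + ε * z₁ / (1 + z₁) := by
  intro h
  have hnorm (z : ℂ) : ‖(ε : ℂ) * z / (1 + z)‖ = ε * ‖z / (1 + z)‖ := by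
    rw [mul_div_assoc, norm_mul, norm_real, Real.norm_of_nonneg hε]
  have hdiff : (ε : ℂ) * z₁ / (1 + z₁) - ε * z₀ / (1 + z₀) = a₀ - a₁ := by
    linear_combination -h
  refine hgap.not_ge ?_
  calc ε * (Rinf / (1 + Rinf) - R₀ / (1 - R₀))
      ≤ ‖(ε : ℂ) * z₁ / (1 + z₁)‖ - ‖(ε : ℂ) * z₀ / (1 + z₀)‖ := by
        rw [hnorm, hnorm, mul_sub]
        gcongr
        · exact div_one_add_le_norm_div_one_add hRinf hz₁ hz₁1
        · exact norm_div_one_add_le hz₀ hR₀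
    _ ≤ ‖(ε : ℂ) * z₁ / (1 + z₁) - ε * z₀ / (1 + z₀)‖ := norm_sub_norm_le _ _
    _ = ‖a₀ - a₁‖ := by rw [hdiff]
    _ ≤ ‖a₀‖ + ‖a₁‖ := norm_sub_le _ _
    _ ≤ δ / 2 + δ / 2 := add_le_add ha₀ ha₁
    _ = δ := add_halves δ

end Complex

open Complex

theorem siegel_map_injective_general (φ : ℂ → ℂ)
    (α : ℝ) (hα : 0 < α)
    (hαφ : ∀ ζ ∈ rightHalfPlane, α * ζ.re ≤ (φ ζ).re)
    (R₀ Rinf : ℝ) (hR₀1 : R₀ < 1) (hRinf : 1 < Rinf)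
    (hφinj : ∀ z₀ ∈ rightHalfPlane, ∀ z₁ ∈ rightHalfPlane, z₀ ≠ z₁ → φ z₀ = φ z₁ →
      (‖z₀‖ < R₀ ∧ Rinf < ‖z₁‖) ∨
      (‖z₁‖ < R₀ ∧ Rinf < ‖z₀‖))
    (ε δ : ℝ) (hε : 0 < ε) (hδ : 0 < δ)
    (hgap : 2 * δ < ε * (Rinf / (1 + Rinf) - R₀ / (1 - R₀)))
    (Φ : ℂ × ℂ → ℂ × ℂ)
    (hΦ : ∀ p : ℂ × ℂ, Φ p =
      (φ p.1, (Real.sqrt α : ℂ) * (δ : ℂ) * p.2 / (1 + φ p.1) + (ε : ℂ) * p.1 / (1 + p.1))) :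
    Set.InjOn Φ Siegel2 := by
  rintro ⟨z₀, w₀⟩ (hp : ‖w₀‖ ^ 2 < z₀.re) ⟨z₁, w₁⟩ (hq : ‖w₁‖ ^ 2 < z₁.re) heq
  simp only [hΦ, Prod.mk.injEq] at heq
  obtain ⟨hφeq, hsecond⟩ := heq
  have hz₀ : z₀ ∈ rightHalfPlane := (by positivity : 0 ≤ ‖w₀‖ ^ 2).trans_lt hp
  have hz₁ : z₁ ∈ rightHalfPlane := (by positivity : 0 ≤ ‖w₁‖ ^ 2).trans_lt hq
  have hw₀ : α * ‖w₀‖ ^ 2 ≤ (φ z₀).re :=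
    (mul_le_mul_of_nonneg_left hp.le hα.le).trans (hαφ z₀ hz₀)
  have hw₁ : α * ‖w₁‖ ^ 2 ≤ (φ z₀).re :=
    hφeq ▸ (mul_le_mul_of_nonneg_left hq.le hα.le).trans (hαφ z₁ hz₁)
  by_cases hz : z₀ = z₁
  · subst hz
    have hf : 1 + φ z₀ ≠ 0 :=
      one_add_ne_zero_of_re_nonneg ((by positivity : 0 ≤ α * ‖w₀‖ ^ 2).trans hw₀)
    have hslope : (√α : ℂ) * δ ≠ 0 :=
      mul_ne_zero (by exact_mod_cast (Real.sqrt_pos.2 hα).ne') (by exact_mod_cast hδ.ne')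
    rw [add_left_inj, div_left_inj' hf, mul_right_inj' hslope] at hsecond
    rw [hsecond]
  · exfalso
    rw [← hφeq] at hsecond
    have hδgap : δ < ε * (Rinf / (1 + Rinf) - R₀ / (1 - R₀)) := by linarith
    have hb₀ := norm_sqrt_mul_mul_div_one_add_le hα.le hδ.le hw₀
    have hb₁ := norm_sqrt_mul_mul_div_one_add_le hα.le hδ.le hw₁
    rcases hφinj z₀ hz₀ z₁ hz₁ hz hφeq with ⟨hnear, hfar⟩ | ⟨hnear, hfar⟩
    · exact add_mul_div_one_add_ne hε.le hR₀1 (by linarith) hδgap hb₀ hb₁ hnear.le hfar.le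
        (one_add_ne_zero_of_re_nonneg hz₁.le) hsecond
    · exact add_mul_div_one_add_ne hε.le hR₀1 (by linarith) hδgap hb₁ hb₀ hnear.le hfar.le
        (one_add_ne_zero_of_re_nonneg hz₀.le) hsecond.symm

/-- **Claim (injectivity of `Φ` on `ℍ²`).**
Let `φ : ℍ → ℂ` be holomorphic with `Re φ > 3` on `ℍ` and `Re φ(ζ) ≥ α·Re ζ` for some
`α > 0`. Suppose any two distinct points with the same `φ`-value split (up to swapping)
as one of modulus `< R₀` and one of modulus `> R_∞`, where `0 < R₀ < 1 < R_∞`. If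
`ε·(R_∞/(1+R_∞) − R₀/(1−R₀)) > 2δ` with `ε, δ > 0`, then
`Φ(z,w) = (φ(z), √α·δ·w/(1+φ(z)) + ε·z/(1+z))` is injective on `ℍ²`. -/
theorem siegel_map_injective (φ : ℂ → ℂ)
    (hφd : DifferentiableOn ℂ φ rightHalfPlane)
    (hφ3 : ∀ ζ ∈ rightHalfPlane, 3 < (φ ζ).re)
    (α : ℝ) (hα : 0 < α)
    (hαφ : ∀ ζ ∈ rightHalfPlane, α * ζ.re ≤ (φ ζ).re)
    (R₀ Rinf : ℝ) (hR₀ : 0 < R₀) (hR₀1 : R₀ < 1) (hRinf : 1 < Rinf)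
    (hφinj : ∀ z₀ ∈ rightHalfPlane, ∀ z₁ ∈ rightHalfPlane, z₀ ≠ z₁ → φ z₀ = φ z₁ →
      (‖z₀‖ < R₀ ∧ Rinf < ‖z₁‖) ∨
      (‖z₁‖ < R₀ ∧ Rinf < ‖z₀‖))
    (ε δ : ℝ) (hε : 0 < ε) (hδ : 0 < δ)
    (hgap : 2 * δ < ε * (Rinf / (1 + Rinf) - R₀ / (1 - R₀)))
    (Φ : ℂ × ℂ → ℂ × ℂ)
    (hΦ : ∀ p : ℂ × ℂ, Φ p =
      (φ p.1, (Real.sqrt α : ℂ) * (δ : ℂ) * p.2 / (1 + φ p.1) + (ε : ℂ) * p.1 / (1 + p.1))) :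
    Set.InjOn Φ Siegel2 :=
  siegel_map_injective_general φ α hα hαφ R₀ Rinf hR₀1 hRinf hφinj ε δ hε hδ hgap Φ hΦ
end
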